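/- The solution set of the equation ∑_{j=1}^n β_j k^{y_j} + C = 0 (k ≥ 2, β_j, C ∈ ℤ, unknowns y_j ∈ ℕ) is a finite union of sets each defined by a finite system of linear equations of the form y_i = y_j + c with c ∈ ℤ (together with fixing some variables to constants); in particular the solution set is an effectively computable semilinear subset of ℕⁿ. -/

import Mathlib

/-- A single linear constraint on a tuple y ∈ ℕⁿ: either `y i = y j + c` (with c ∈ ℤ)
or fixing a variable to a constant `y i = c`. -/
inductive LinConstraint (n : ℕ)
  | diff (i j : Fin n) (c : ℤ)
  | fix (i : Fin n) (c : ℕ)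

def LinConstraint.Holds {n : ℕ} (y : Fin n → ℕ) : LinConstraint n → Prop
  | .diff i j c => (y i : ℤ) = (y j : ℤ) + c
  | .fix i c => y i = c

open Finset

namespace ExpEq

variable {k n : ℕ} (β : Fin n → ℤ) (C : ℤ)

/-- the equation -/
def Eqn (k : ℕ) (β : Fin n → ℤ) (C : ℤ) (y : Fin n → ℕ) : Prop :=
  (∑ j, β j * (k : ℤ) ^ (y j)) + C = 0

/-- `T` is a cut level for `y`: no value in `[T, T+B)`. -/
def IsCut (B : ℕ) (y : Fin n → ℕ) (T : ℕ) : Prop := ∀ j, T ≤ y j → T + B ≤ y j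

/-- Splitting lemma. -/
lemma split (hk : 2 ≤ k) {B : ℕ}
    (hB : ((∑ j, (β j).natAbs : ℕ) : ℤ) + (C.natAbs : ℤ) < (k : ℤ) ^ B)
    {y : Fin n → ℕ} (hy : Eqn k β C y) {T : ℕ} (hT : IsCut B y T) :
    (∑ j ∈ univ.filter (fun j => y j < T), β j * (k : ℤ) ^ (y j)) + C = 0 := by
  classical
  have hk1 : (1 : ℤ) ≤ (k : ℤ) := by exact_mod_cast Nat.one_le_of_lt hk
  set L : ℤ := (∑ j ∈ univ.filter (fun j => y j < T), β j * (k : ℤ) ^ (y j)) + C with hL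
  set H : ℤ := ∑ j ∈ univ.filter (fun j => ¬ y j < T), β j * (k : ℤ) ^ (y j) with hH
  have hsum : L + H = 0 := by
    have := Finset.sum_filter_add_sum_filter_not (univ : Finset (Fin n))
      (fun j => y j < T) (fun j => β j * (k : ℤ) ^ (y j))
    rw [hL, hH]
    rw [Eqn] at hy
    linarith [this, hy]
  have hdvd : ((k : ℤ) ^ (T + B)) ∣ H := by
    apply Finset.dvd_sum
    intro j hj
    simp only [mem_filter, mem_univ, true_and, not_lt] at hj
    have : T + B ≤ y j := hT j hj
    exact Dvd.dvd.mul_left (pow_dvd_pow _ this) _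
  have habs : |L| < (k : ℤ) ^ (T + B) := by
    have h1 : |L| ≤ (∑ j ∈ univ.filter (fun j => y j < T), |β j| * (k : ℤ) ^ (y j)) + |C| := by
      calc |L| ≤ |∑ j ∈ univ.filter (fun j => y j < T), β j * (k : ℤ) ^ (y j)| + |C| :=
            abs_add_le _ _
        _ ≤ (∑ j ∈ univ.filter (fun j => y j < T), |β j * (k : ℤ) ^ (y j)|) + |C| := by
            gcongr; exact Finset.abs_sum_le_sum_abs _ _
        _ = (∑ j ∈ univ.filter (fun j => y j < T), |β j| * (k : ℤ) ^ (y j)) + |C| := by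
            congr 1; apply Finset.sum_congr rfl; intro j _
            rw [abs_mul, abs_pow, abs_of_nonneg (by positivity : (0:ℤ) ≤ (k:ℤ))]
    have h2 : (∑ j ∈ univ.filter (fun j => y j < T), |β j| * (k : ℤ) ^ (y j)) + |C|
        ≤ ((∑ j, |β j|) + |C|) * (k : ℤ) ^ T := by
      have hkT : (1 : ℤ) ≤ (k : ℤ) ^ T := one_le_pow₀ hk1
      have s1 : (∑ j ∈ univ.filter (fun j => y j < T), |β j| * (k : ℤ) ^ (y j))
          ≤ ∑ j ∈ univ.filter (fun j => y j < T), |β j| * (k : ℤ) ^ T := by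
        apply Finset.sum_le_sum
        intro j hj
        simp only [mem_filter] at hj
        exact mul_le_mul_of_nonneg_left (pow_le_pow_right₀ hk1 (le_of_lt hj.2)) (abs_nonneg _)
      have s2 : (∑ j ∈ univ.filter (fun j => y j < T), |β j| * (k : ℤ) ^ T)
          ≤ (∑ j, |β j|) * (k : ℤ) ^ T := by
        rw [← Finset.sum_mul]
        apply mul_le_mul_of_nonneg_right _ (by positivity)
        exact Finset.sum_le_sum_of_subset_of_nonneg (filter_subset _ _)
            (fun j _ _ => abs_nonneg _)
      have s3 : |C| ≤ |C| * (k : ℤ) ^ T := le_mul_of_one_le_right (abs_nonneg _) hkT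
      calc (∑ j ∈ univ.filter (fun j => y j < T), |β j| * (k : ℤ) ^ (y j)) + |C|
          ≤ (∑ j, |β j|) * (k : ℤ) ^ T + |C| * (k : ℤ) ^ T := add_le_add (le_trans s1 s2) s3
        _ = ((∑ j, |β j|) + |C|) * (k : ℤ) ^ T := by ring
    have h3 : ((∑ j, |β j|) + |C|) * (k : ℤ) ^ T < (k : ℤ) ^ (T + B) := by
      have hβ : (∑ j, |β j|) + |C| < (k : ℤ) ^ B := by
        have e1 : ((∑ j, (β j).natAbs : ℕ) : ℤ) = ∑ j, |β j| := by
          push_cast [Int.natCast_natAbs]; rfl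
        have e2 : ((C.natAbs : ℕ) : ℤ) = |C| := Int.natCast_natAbs C
        rw [← e1, ← e2]; exact hB
      calc ((∑ j, |β j|) + |C|) * (k : ℤ) ^ T < (k : ℤ) ^ B * (k : ℤ) ^ T := by
            apply mul_lt_mul_of_pos_right hβ; positivity
        _ = (k : ℤ) ^ (T + B) := by rw [← pow_add]; ring_nf
    linarith
  have hdvdL : ((k : ℤ) ^ (T + B)) ∣ L := by
    have : L = -H := by linarith
    rw [this]; exact dvd_neg.mpr hdvd
  exact Int.eq_zero_of_abs_lt_dvd hdvdL habs


/-- Band lemma: the sum over a band between two cuts vanishes. -/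
lemma split_band (hk : 2 ≤ k) {B : ℕ}
    (hB : ((∑ j, (β j).natAbs : ℕ) : ℤ) + (C.natAbs : ℤ) < (k : ℤ) ^ B)
    {y : Fin n → ℕ} (hy : Eqn k β C y) {T T' : ℕ} (hT : IsCut B y T) (hT' : IsCut B y T')
    (hTT : T ≤ T') :
    ∑ j ∈ univ.filter (fun j => T ≤ y j ∧ y j < T'), β j * (k : ℤ) ^ (y j) = 0 := by
  classical
  have h1 := split β C hk hB hy hT
  have h2 := split β C hk hB hy hT'
  have h3 := Finset.sum_filter_add_sum_filter_not (univ.filter (fun j => y j < T'))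
    (fun j => y j < T) (fun j => β j * (k : ℤ) ^ (y j))
  rw [Finset.filter_filter, Finset.filter_filter] at h3
  have e1 : univ.filter (fun j => y j < T' ∧ y j < T) = univ.filter (fun j => y j < T) := by
    apply Finset.filter_congr; intro j _; constructor
    · exact fun h => h.2
    · exact fun h => ⟨lt_of_lt_of_le h hTT, h⟩
  have e2 : univ.filter (fun j => y j < T' ∧ ¬ y j < T)
      = univ.filter (fun j => T ≤ y j ∧ y j < T') := by
    apply Finset.filter_congr; intro j _; constructor
    · exact fun h => ⟨not_lt.mp h.2, h.1⟩
    · exact fun h => ⟨h.2, not_lt.mpr h.1⟩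
  rw [e1, e2] at h3
  linarith

section Construct

variable (B : ℕ) (y : Fin n → ℕ)

open Classical in
/-- The set of cut levels at or below `y i`. -/
noncomputable def cutsBelow (i : Fin n) : Finset ℕ :=
  (Finset.range (y i + 1)).filter (fun T => IsCut B y T)

/-- `key i = 0` if `i` is "grounded" (no cut below it); otherwise `key i = T + 1` where
`T` is the largest cut level `≤ y i`. -/
noncomputable def key (i : Fin n) : ℕ :=
  if h : (cutsBelow B y i).Nonempty then (cutsBelow B y i).max' h + 1 else 0

/-- An element of minimal `y`-value in the cluster `{j | key j = t}`. -/
noncomputable def argminOpt (t : ℕ) : Option (Fin n) :=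
  if h : (univ.filter fun j => key B y j = t).Nonempty then
    some (Finset.exists_min_image _ y h).choose
  else none

/-- Representative assignment: `none` for grounded indices, the cluster's minimum otherwise. -/
noncomputable def pivot (i : Fin n) : Option (Fin n) :=
  if key B y i = 0 then none else argminOpt B y (key B y i)

/-- Base values: absolute value for grounded indices, offset within the cluster otherwise. -/
noncomputable def bvec (i : Fin n) : ℕ :=
  match pivot B y i with
  | none => y i
  | some r => y i - y r

lemma mem_cutsBelow {i : Fin n} {T : ℕ} :
    T ∈ cutsBelow B y i ↔ IsCut B y T ∧ T ≤ y i := by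
  simp [cutsBelow, Nat.lt_succ_iff, and_comm]

lemma key_zero_spec {i : Fin n} (h : key B y i = 0) :
    ∀ T, IsCut B y T → ¬ T ≤ y i := by
  intro T hT hTi
  have hne : (cutsBelow B y i).Nonempty := ⟨T, (mem_cutsBelow B y).mpr ⟨hT, hTi⟩⟩
  rw [key, dif_pos hne] at h
  omega

lemma key_ne_zero_spec {i : Fin n} (h : key B y i ≠ 0) :
    IsCut B y (key B y i - 1) ∧ (key B y i - 1) ≤ y i ∧
      (∀ T, IsCut B y T → T ≤ y i → T < key B y i) := by
  have hne : (cutsBelow B y i).Nonempty := by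
    by_contra hc
    rw [key, dif_neg hc] at h
    exact h rfl
  rw [key, dif_pos hne]
  have hmem := Finset.max'_mem (cutsBelow B y i) hne
  rw [mem_cutsBelow] at hmem
  refine ⟨by simpa using hmem.1, by simpa using hmem.2, ?_⟩
  intro T hT hTi
  have := Finset.le_max' (cutsBelow B y i) T ((mem_cutsBelow B y).mpr ⟨hT, hTi⟩)
  omega

lemma pivot_spec {i : Fin n} (h : key B y i ≠ 0) :
    ∃ r, pivot B y i = some r ∧ key B y r = key B y i ∧
      ∀ j, key B y j = key B y i → y r ≤ y j := by
  have hne : (univ.filter fun j => key B y j = key B y i).Nonempty :=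
    ⟨i, by simp⟩
  rw [pivot, if_neg h, argminOpt, dif_pos hne]
  have hspec := (Finset.exists_min_image (univ.filter fun j => key B y j = key B y i) y hne).choose_spec
  refine ⟨_, rfl, ?_, ?_⟩
  · exact (Finset.mem_filter.mp hspec.1).2
  · intro j hj
    exact hspec.2 j (by simp [hj])

lemma pivot_eq_none_iff {i : Fin n} : pivot B y i = none ↔ key B y i = 0 := by
  constructor
  · intro h
    by_contra hne
    obtain ⟨r, hr, -⟩ := pivot_spec B y hne
    rw [h] at hr; exact nomatch hr
  · intro h; rw [pivot, if_pos h]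

lemma pivot_canonical {i j : Fin n} (h : key B y i = key B y j) :
    pivot B y i = pivot B y j := by
  simp only [pivot, h]

lemma pivot_some_spec {i : Fin n} {r : Fin n} (h : pivot B y i = some r) :
    key B y r = key B y i ∧ key B y i ≠ 0 ∧
      (∀ j, key B y j = key B y i → y r ≤ y j) := by
  have hne : key B y i ≠ 0 := by
    intro h0
    rw [(pivot_eq_none_iff B y).mpr h0] at h
    exact nomatch h
  obtain ⟨r', hr', hkey, hmin⟩ := pivot_spec B y hne
  rw [hr'] at h
  obtain rfl : r' = r := Option.some_inj.mp h
  exact ⟨hkey, hne, hmin⟩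

lemma pivot_idem {i r : Fin n} (h : pivot B y i = some r) : pivot B y r = some r := by
  obtain ⟨hkey, -, -⟩ := pivot_some_spec B y h
  rw [pivot_canonical B y hkey, h]

lemma bvec_of_some {i r : Fin n} (h : pivot B y i = some r) :
    bvec B y i = y i - y r ∧ y r ≤ y i := by
  obtain ⟨hkey, -, hmin⟩ := pivot_some_spec B y h
  constructor
  · simp only [bvec, h]
  · exact hmin i rfl

lemma bvec_of_none {i : Fin n} (h : pivot B y i = none) : bvec B y i = y i := by
  simp only [bvec, h]

lemma bvec_pivot_zero {i r : Fin n} (h : pivot B y i = some r) : bvec B y r = 0 := by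
  have := pivot_idem B y h
  simp only [bvec, this]
  omega

/-- Density counting: if `Q` disjoint windows each contain a value of `y`, then `Q ≤ n`. -/
lemma card_bound (hB0 : 0 < B) {lo Q : ℕ}
    (hw : ∀ q, q < Q → ∃ j, lo + q * B ≤ y j ∧ y j < lo + q * B + B) : Q ≤ n := by
  classical
  rcases Nat.eq_zero_or_pos Q with hQ | hQ
  · omega
  obtain ⟨j0, -⟩ := hw 0 hQ
  set f : ℕ → Fin n := fun q =>
    if h : ∃ j, lo + q * B ≤ y j ∧ y j < lo + q * B + B then h.choose else j0 with hf
  have hinj : Set.InjOn f (Finset.range Q) := by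
    intro q hq q' hq' heq
    simp only [Finset.coe_range, Set.mem_Iio] at hq hq'
    have h1 := hw q hq
    have h2 := hw q' hq'
    rw [hf] at heq
    simp only [dif_pos h1, dif_pos h2] at heq
    have s1 := h1.choose_spec
    have s2 := h2.choose_spec
    rw [heq] at s1
    have hqq' : q * B < q' * B + B := by omega
    have hq'q : q' * B < q * B + B := by omega
    have e1 : q < q' + 1 := by
      have h3 : q * B < (q' + 1) * B := by rw [Nat.succ_mul]; exact hqq'
      exact lt_of_mul_lt_mul_right h3 (Nat.zero_le B)
    have e2 : q' < q + 1 := by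
      have h3 : q' * B < (q + 1) * B := by rw [Nat.succ_mul]; exact hq'q
      exact lt_of_mul_lt_mul_right h3 (Nat.zero_le B)
    omega
  have hcard := Finset.card_le_card_of_injOn f (fun q _ => Finset.mem_univ (f q)) hinj
  simpa using hcard

lemma grounded_bound (hB0 : 0 < B) {i : Fin n} (h : key B y i = 0) : y i < n * B := by
  have hQ : y i / B + 1 ≤ n := by
    apply card_bound B y hB0 (lo := 0)
    intro q hq
    have hqB : q * B ≤ y i := by
      have hq' : q ≤ y i / B := by omega
      calc q * B ≤ (y i / B) * B := Nat.mul_le_mul_right B hq'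
        _ ≤ y i := Nat.div_mul_le_self _ _
    have hnc : ¬ IsCut B y (q * B) := fun hc => key_zero_spec B y h _ hc hqB
    rw [IsCut] at hnc
    push_neg at hnc
    obtain ⟨j, hj1, hj2⟩ := hnc
    exact ⟨j, by omega, by omega⟩
  have hdiv : y i / B < n := by omega
  rwa [Nat.div_lt_iff_lt_mul hB0] at hdiv

lemma float_bound (hB0 : 0 < B) {i r : Fin n} (h : pivot B y i = some r) :
    y i - y r < (n + 1) * B := by
  obtain ⟨hkey, hne, hmin⟩ := pivot_some_spec B y h
  have hyr : y r ≤ y i := hmin i rfl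
  obtain ⟨hcut, hle, hmax⟩ := key_ne_zero_spec B y hne
  have hTr : key B y i - 1 ≤ y r := by
    obtain ⟨-, hler, -⟩ := key_ne_zero_spec B y (show key B y r ≠ 0 by rw [hkey]; exact hne)
    omega
  have hQ : (y i - y r) / B ≤ n := by
    apply card_bound B y hB0 (lo := y r + B)
    intro q hq
    have h1 : (q + 1) * B ≤ y i - y r := by
      have hq' : q + 1 ≤ (y i - y r) / B := by omega
      calc (q + 1) * B ≤ ((y i - y r) / B) * B := Nat.mul_le_mul_right B hq'
        _ ≤ y i - y r := Nat.div_mul_le_self _ _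
    have e : (q + 1) * B = q * B + B := by ring
    have hle_i : y r + B + q * B ≤ y i := by omega
    have hnc : ¬ IsCut B y (y r + B + q * B) := by
      intro hc
      have h2 := hmax _ hc hle_i
      omega
    rw [IsCut] at hnc
    push_neg at hnc
    obtain ⟨j, hj1, hj2⟩ := hnc
    exact ⟨j, hj1, by omega⟩
  have hdiv : (y i - y r) / B < n + 1 := by omega
  rwa [Nat.div_lt_iff_lt_mul hB0] at hdiv

lemma isCut_top : IsCut B y (univ.sup y + 1) := by
  intro j hj
  have := Finset.le_sup (f := y) (Finset.mem_univ j)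
  omega

lemma grounded_sum (hk : 2 ≤ k)
    (hB : ((∑ j, (β j).natAbs : ℕ) : ℤ) + (C.natAbs : ℤ) < (k : ℤ) ^ B)
    (hy : Eqn k β C y) :
    (∑ j ∈ univ.filter (fun j => key B y j = 0), β j * (k : ℤ) ^ (y j)) + C = 0 := by
  classical
  set M := univ.sup y with hM
  have htop : IsCut B y (M + 1) := isCut_top B y
  have hcne : ((Finset.range (M + 2)).filter (fun T => IsCut B y T)).Nonempty :=
    ⟨M + 1, by simp only [mem_filter, Finset.mem_range]; exact ⟨by omega, htop⟩⟩
  set T0 := (((Finset.range (M + 2)).filter (fun T => IsCut B y T))).min' hcne with hT0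
  have hT0cut : IsCut B y T0 := by
    have := Finset.min'_mem _ hcne
    rw [mem_filter] at this
    exact this.2
  have hT0min : ∀ T, IsCut B y T → T0 ≤ T := by
    intro T hT
    by_cases hTM : T < M + 2
    · exact Finset.min'_le _ _ (by simp only [mem_filter, Finset.mem_range]; exact ⟨hTM, hT⟩)
    · have h1 : T0 ≤ M + 1 := Finset.min'_le _ _
        (by simp only [mem_filter, Finset.mem_range]; exact ⟨by omega, htop⟩)
      omega
  have hset : univ.filter (fun j => key B y j = 0) = univ.filter (fun j => y j < T0) := by
    apply Finset.filter_congr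
    intro j _
    constructor
    · intro h0
      by_contra hge
      exact key_zero_spec B y h0 T0 hT0cut (not_lt.mp hge)
    · intro hlt
      by_contra hne
      obtain ⟨hcut, hle, -⟩ := key_ne_zero_spec B y hne
      have := hT0min _ hcut
      omega
  rw [hset]
  exact split β C hk hB hy hT0cut

lemma cluster_sum (hk : 2 ≤ k)
    (hB : ((∑ j, (β j).natAbs : ℕ) : ℤ) + (C.natAbs : ℤ) < (k : ℤ) ^ B)
    (hy : Eqn k β C y) {t : ℕ} (ht : t ≠ 0) {j0 : Fin n} (hj0 : key B y j0 = t) :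
    ∑ j ∈ univ.filter (fun j => key B y j = t), β j * (k : ℤ) ^ (y j) = 0 := by
  classical
  obtain ⟨hcutT, hleT, hmaxT⟩ :=
    key_ne_zero_spec B y (show key B y j0 ≠ 0 by rw [hj0]; exact ht)
  rw [hj0] at hcutT hleT hmaxT
  set T := t - 1 with hT
  set M := univ.sup y with hM
  have htop : IsCut B y (M + 1) := isCut_top B y
  have hj0M : y j0 ≤ M := Finset.le_sup (Finset.mem_univ j0)
  have hne : ((Finset.range (M + 2)).filter (fun T' => IsCut B y T' ∧ T < T')).Nonempty :=
    ⟨M + 1, by simp only [mem_filter, Finset.mem_range]; exact ⟨by omega, htop, by omega⟩⟩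
  set N := (((Finset.range (M + 2)).filter (fun T' => IsCut B y T' ∧ T < T'))).min' hne with hN
  have hNmem : IsCut B y N ∧ T < N := by
    have := Finset.min'_mem _ hne
    rw [mem_filter] at this
    exact this.2
  have hNmin : ∀ T'', IsCut B y T'' → T < T'' → N ≤ T'' := by
    intro T'' hc hlt
    by_cases hTM : T'' < M + 2
    · exact Finset.min'_le _ _ (by simp only [mem_filter, Finset.mem_range]; exact ⟨hTM, hc, hlt⟩)
    · have h1 : N ≤ M + 1 := Finset.min'_le _ _
        (by simp only [mem_filter, Finset.mem_range]; exact ⟨by omega, htop, by omega⟩)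
      omega
  have hset : univ.filter (fun j => key B y j = t)
      = univ.filter (fun j => T ≤ y j ∧ y j < N) := by
    apply Finset.filter_congr
    intro j _
    constructor
    · intro hkj
      obtain ⟨hc, hl, hm⟩ := key_ne_zero_spec B y (show key B y j ≠ 0 by rw [hkj]; exact ht)
      rw [hkj] at hc hl hm
      refine ⟨hl, ?_⟩
      by_contra hge
      have := hm N hNmem.1 (not_lt.mp hge)
      omega
    · rintro ⟨h1, h2⟩
      have hkne : key B y j ≠ 0 := by
        intro h0
        exact key_zero_spec B y h0 T hcutT h1
      obtain ⟨hc, hl, hm⟩ := key_ne_zero_spec B y hkne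
      have hup : key B y j - 1 ≤ T := by
        by_contra hgt
        have := hNmin _ hc (by omega)
        omega
      have hlo : T < key B y j := hm T hcutT h1
      omega
  rw [hset]
  exact split_band β C hk hB hy hcutT hNmem.1 (le_of_lt hNmem.2)

lemma offset_sum (hk : 2 ≤ k)
    (hB : ((∑ j, (β j).natAbs : ℕ) : ℤ) + (C.natAbs : ℤ) < (k : ℤ) ^ B)
    (hy : Eqn k β C y) {i r : Fin n} (hpi : pivot B y i = some r) :
    ∑ j ∈ univ.filter (fun j => key B y j = key B y i), β j * (k : ℤ) ^ (bvec B y j) = 0 := by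
  classical
  obtain ⟨hkeyr, hne0, hmin⟩ := pivot_some_spec B y hpi
  have hcl := cluster_sum β C B y hk hB hy hne0 (j0 := i) rfl
  have hfact : ∀ j ∈ univ.filter (fun j => key B y j = key B y i),
      β j * (k : ℤ) ^ (y j) = (β j * (k : ℤ) ^ (bvec B y j)) * (k : ℤ) ^ (y r) := by
    intro j hj
    rw [mem_filter] at hj
    have hpij : pivot B y j = some r := by
      rw [pivot_canonical B y hj.2]
      exact hpi
    obtain ⟨hbj, hyrj⟩ := bvec_of_some B y hpij
    have hyj : y j = bvec B y j + y r := by omega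
    rw [hyj, pow_add]
    ring
  rw [Finset.sum_congr rfl hfact, ← Finset.sum_mul] at hcl
  have hkne : ((k : ℤ) ^ (y r)) ≠ 0 := by
    apply pow_ne_zero
    have : (0 : ℤ) < (k : ℤ) := by exact_mod_cast (by omega : 0 < k)
    omega
  exact (mul_eq_zero.mp hcl).resolve_right hkne

/-- Soundness: any `y'` satisfying the constraint system extracted from a solution `y`
is itself a solution. -/
lemma sound (hk : 2 ≤ k)
    (hB : ((∑ j, (β j).natAbs : ℕ) : ℤ) + (C.natAbs : ℤ) < (k : ℤ) ^ B)
    (hy : Eqn k β C y) (y' : Fin n → ℕ)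
    (hc : ∀ i, (match pivot B y i with
      | none => y' i = bvec B y i
      | some r => (y' i : ℤ) = (y' r : ℤ) + (bvec B y i : ℤ))) :
    Eqn k β C y' := by
  classical
  have hdiff : ∑ j, β j * ((k : ℤ) ^ (y' j) - (k : ℤ) ^ (y j)) = 0 := by
    rw [← Finset.sum_fiberwise_of_maps_to
      (g := key B y) (t := univ.image (key B y))
      (fun j _ => Finset.mem_image_of_mem _ (Finset.mem_univ j))]
    apply Finset.sum_eq_zero
    intro t htmem
    obtain ⟨j0, -, hj0⟩ := Finset.mem_image.mp htmem
    by_cases ht : t = 0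
    · apply Finset.sum_eq_zero
      intro j hj
      rw [mem_filter] at hj
      have hpij : pivot B y j = none := (pivot_eq_none_iff B y).mpr (by rw [hj.2, ht])
      have hcj := hc j
      rw [hpij] at hcj
      rw [bvec_of_none B y hpij] at hcj
      rw [hcj, sub_self, mul_zero]
    · obtain ⟨r, hpir, -, -⟩ := pivot_spec B y (show key B y j0 ≠ 0 by rw [hj0]; exact ht)
      have hfact : ∀ j ∈ univ.filter (fun j => key B y j = t),
          β j * ((k : ℤ) ^ (y' j) - (k : ℤ) ^ (y j))
            = (β j * (k : ℤ) ^ (bvec B y j)) * ((k : ℤ) ^ (y' r) - (k : ℤ) ^ (y r)) := by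
        intro j hj
        rw [mem_filter] at hj
        have hpij : pivot B y j = some r := by
          rw [pivot_canonical B y (show key B y j = key B y j0 by rw [hj.2, hj0])]
          exact hpir
        obtain ⟨hbj, hyr⟩ := bvec_of_some B y hpij
        have hyj : y j = bvec B y j + y r := by omega
        have hcj := hc j
        rw [hpij] at hcj
        have hy'j : y' j = bvec B y j + y' r := by
          have hn : (y' j : ℤ) = ((bvec B y j + y' r : ℕ) : ℤ) := by push_cast; linarith
          exact_mod_cast hn
        rw [hyj, hy'j, pow_add, pow_add]
        ring
      rw [Finset.sum_congr rfl hfact, ← Finset.sum_mul]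
      have hos := offset_sum β C B y hk hB hy hpir
      rw [hj0] at hos
      rw [hos, zero_mul]
  rw [Eqn] at hy ⊢
  have expand : ∑ j, β j * ((k : ℤ) ^ (y' j) - (k : ℤ) ^ (y j))
      = (∑ j, β j * (k : ℤ) ^ (y' j)) - ∑ j, β j * (k : ℤ) ^ (y j) := by
    rw [← Finset.sum_sub_distrib]
    apply Finset.sum_congr rfl
    intros
    ring
  linarith

end Construct

section Patterns

variable (p : (Fin n → ℕ) × (Fin n → Option (Fin n)))

/-- Pointwise constraint semantics of a pattern. -/
def Cst (y' : Fin n → ℕ) (i : Fin n) : Prop :=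
  match p.2 i with
  | none => y' i = p.1 i
  | some r => (y' i : ℤ) = (y' r : ℤ) + (p.1 i : ℤ)

lemma Cst_def_none {y' : Fin n → ℕ} {i : Fin n} (h : p.2 i = none) :
    Cst p y' i ↔ y' i = p.1 i := by
  simp [Cst, h]

lemma Cst_def_some {y' : Fin n → ℕ} {i r : Fin n} (h : p.2 i = some r) :
    Cst p y' i ↔ (y' i : ℤ) = (y' r : ℤ) + (p.1 i : ℤ) := by
  simp [Cst, h]

/-- The constraint system associated with a pattern. -/
def SysOf : List (LinConstraint n) :=
  (List.finRange n).map fun i =>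
    match p.2 i with
    | none => LinConstraint.fix i (p.1 i)
    | some r => LinConstraint.diff i r (p.1 i)

lemma holdsAll_iff (y' : Fin n → ℕ) :
    (∀ cns ∈ SysOf p, cns.Holds y') ↔ ∀ i, Cst p y' i := by
  constructor
  · intro h i
    have hmem : (match p.2 i with
        | none => LinConstraint.fix i (p.1 i)
        | some r => LinConstraint.diff i r (p.1 i)) ∈ SysOf p :=
      List.mem_map_of_mem (List.mem_finRange i)
    have hh := h _ hmem
    cases hpi : p.2 i with
    | none =>
      rw [hpi] at hh
      rw [Cst_def_none p hpi]
      exact hh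
    | some r =>
      rw [hpi] at hh
      rw [Cst_def_some p hpi]
      exact hh
  · intro h cns hcns
    rw [SysOf, List.mem_map] at hcns
    obtain ⟨i, -, hi⟩ := hcns
    subst hi
    cases hpi : p.2 i with
    | none =>
      exact (Cst_def_none p hpi).mp (h i)
    | some r =>
      exact (Cst_def_some p hpi).mp (h i)

/-- Indicator vector of the cluster represented by `r`. -/
def vecOf (r : Fin n) : Fin n → ℕ := fun i => if p.2 i = some r then 1 else 0

/-- The period set of a pattern. -/
noncomputable def POf : Finset (Fin n → ℕ) := Finset.image (vecOf p) univ

lemma sum_apply_eval (c : (Fin n → ℕ) → ℕ) (i : Fin n) :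
    (p.1 + ∑ v ∈ POf p, c v • v) i = p.1 i + ∑ v ∈ POf p, c v * v i := by
  simp [Finset.sum_apply, Pi.add_apply, Pi.smul_apply, smul_eq_mul]

lemma sum_vec_none {i : Fin n} (h : p.2 i = none) (c : (Fin n → ℕ) → ℕ) :
    ∑ v ∈ POf p, c v * v i = 0 := by
  apply Finset.sum_eq_zero
  intro v hv
  obtain ⟨r'', -, rfl⟩ := Finset.mem_image.mp hv
  simp [vecOf, h]

lemma sum_vec_some {i r : Fin n} (h : p.2 i = some r) (c : (Fin n → ℕ) → ℕ) :
    ∑ v ∈ POf p, c v * v i = c (vecOf p r) := by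
  rw [Finset.sum_eq_single (vecOf p r)]
  · simp [vecOf, h]
  · intro v hv hne
    obtain ⟨r'', -, rfl⟩ := Finset.mem_image.mp hv
    by_cases hir : p.2 i = some r''
    · obtain rfl : r'' = r := by
        rw [h] at hir
        exact (Option.some_inj.mp hir).symm
      exact absurd rfl hne
    · simp [vecOf, hir]
  · intro hnm
    exact absurd (Finset.mem_image_of_mem _ (Finset.mem_univ r)) hnm

/-- Equivalence of the constraint description and the semilinear description. -/
lemma equivSets (hV1 : ∀ i r, p.2 i = some r → p.2 r = some r ∧ p.1 r = 0)
    (y' : Fin n → ℕ) :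
    (∀ i, Cst p y' i) ↔ ∃ c : (Fin n → ℕ) → ℕ, y' = p.1 + ∑ v ∈ POf p, c v • v := by
  classical
  constructor
  · intro h
    refine ⟨fun v => if hv : ∃ r, p.2 r = some r ∧ v = vecOf p r then y' hv.choose else 0, ?_⟩
    funext i
    rw [sum_apply_eval]
    cases hpi : p.2 i with
    | none =>
      have hci := (Cst_def_none p hpi).mp (h i)
      rw [sum_vec_none p hpi]
      omega
    | some r =>
      have hci := (Cst_def_some p hpi).mp (h i)
      obtain ⟨hrr, hr0⟩ := hV1 i r hpi
      rw [sum_vec_some p hpi]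
      have hex : ∃ r', p.2 r' = some r' ∧ vecOf p r = vecOf p r' := ⟨r, hrr, rfl⟩
      rw [dif_pos hex]
      have hsp := hex.choose_spec
      have hcr : hex.choose = r := by
        by_cases hcc : hex.choose = r
        · exact hcc
        · exfalso
          have e1 : vecOf p r hex.choose = 0 := by
            simp only [vecOf, hsp.1]
            rw [if_neg (by simp [hcc])]
          have e2 : vecOf p hex.choose hex.choose = 1 := by
            simp [vecOf, hsp.1]
          have e3 := congrFun hsp.2 hex.choose
          omega
      rw [hcr]
      have hn : (y' i : ℤ) = ((p.1 i + y' r : ℕ) : ℤ) := by push_cast; linarith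
      exact_mod_cast hn
  · rintro ⟨c, hc⟩
    have hey : ∀ i, y' i = p.1 i + ∑ v ∈ POf p, c v * v i := by
      intro i
      rw [hc]
      exact sum_apply_eval p c i
    intro i
    cases hpi : p.2 i with
    | none =>
      rw [Cst_def_none p hpi]
      rw [hey i, sum_vec_none p hpi]
      omega
    | some r =>
      rw [Cst_def_some p hpi]
      obtain ⟨hrr, hr0⟩ := hV1 i r hpi
      have e1 := hey i
      rw [sum_vec_some p hpi] at e1
      have e2 := hey r
      rw [sum_vec_some p hrr, hr0] at e2
      rw [e1, e2]
      push_cast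
      ring

end Patterns

/-- A "good" pattern: bounded base, coherent representatives, and soundness. -/
def GoodP (k : ℕ) (β : Fin n → ℤ) (C : ℤ) (B : ℕ)
    (p : (Fin n → ℕ) × (Fin n → Option (Fin n))) : Prop :=
  (∀ i, p.1 i < (n + 1) * B + 1) ∧
  (∀ i r, p.2 i = some r → p.2 r = some r ∧ p.1 r = 0) ∧
  (∀ y' : Fin n → ℕ, (∀ i, Cst p y' i) → Eqn k β C y')

/-- All patterns with base bounded by `E`. -/
noncomputable def Pats (E : ℕ) : Finset ((Fin n → ℕ) × (Fin n → Option (Fin n))) :=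
  Finset.image (fun q : (Fin n → Fin (E + 1)) × (Fin n → Option (Fin n)) =>
    ((fun i => (q.1 i : ℕ)), q.2)) Finset.univ

lemma mem_Pats {E : ℕ} {p : (Fin n → ℕ) × (Fin n → Option (Fin n))}
    (h : ∀ i, p.1 i < E + 1) : p ∈ Pats (n := n) E := by
  rw [Pats, Finset.mem_image]
  exact ⟨((fun i => ⟨p.1 i, h i⟩), p.2), Finset.mem_univ _,
    Prod.ext (funext fun i => rfl) rfl⟩

open Classical in
/-- The (finite) collection of good patterns. -/
noncomputable def GoodPats (k : ℕ) (β : Fin n → ℤ) (C : ℤ) (B : ℕ) :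
    Finset ((Fin n → ℕ) × (Fin n → Option (Fin n))) :=
  (Pats ((n + 1) * B)).filter (GoodP k β C B)

lemma GoodPats_mem_of {B : ℕ} {p : (Fin n → ℕ) × (Fin n → Option (Fin n))}
    (hp : GoodP k β C B p) : p ∈ GoodPats k β C B := by
  classical
  rw [GoodPats, Finset.mem_filter]
  exact ⟨mem_Pats hp.1, hp⟩

lemma GoodP_of_mem {B : ℕ} {p : (Fin n → ℕ) × (Fin n → Option (Fin n))}
    (hp : p ∈ GoodPats k β C B) : GoodP k β C B p := by
  classical
  rw [GoodPats, Finset.mem_filter] at hp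
  exact hp.2

/-- Completeness: every solution matches the good pattern extracted from it. -/
lemma complete (hk : 2 ≤ k) {B : ℕ} (hB0 : 0 < B)
    (hB : ((∑ j, (β j).natAbs : ℕ) : ℤ) + (C.natAbs : ℤ) < (k : ℤ) ^ B)
    {y : Fin n → ℕ} (hy : Eqn k β C y) :
    GoodP k β C B (bvec B y, pivot B y) ∧ (∀ i, Cst (bvec B y, pivot B y) y i) := by
  constructor
  · refine ⟨?_, ?_, ?_⟩
    · intro i
      cases hpi : pivot B y i with
      | none =>
        have h0 := (pivot_eq_none_iff B y).mp hpi
        have h1 := grounded_bound B y hB0 h0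
        have h2 := bvec_of_none B y hpi
        have h3 : n * B ≤ (n + 1) * B := Nat.mul_le_mul_right B (by omega)
        show bvec B y i < (n + 1) * B + 1
        omega
      | some r =>
        obtain ⟨hbj, hyr⟩ := bvec_of_some B y hpi
        have h1 := float_bound B y hB0 hpi
        show bvec B y i < (n + 1) * B + 1
        omega
    · intro i r hpi
      exact ⟨pivot_idem B y hpi, bvec_pivot_zero B y hpi⟩
    · intro y' hy'
      exact sound β C B y hk hB hy y' hy'
  · intro i
    cases hpi : pivot B y i with
    | none =>
      rw [Cst_def_none _ hpi]
      exact (bvec_of_none B y hpi).symm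
    | some r =>
      rw [Cst_def_some _ hpi]
      obtain ⟨hbj, hyr⟩ := bvec_of_some B y hpi
      have hb : (bvec B y, pivot B y).1 i = y i - y r := hbj
      omega

end ExpEq

/-- the solution set of ∑ⱼ βⱼ k^{yⱼ} + C = 0 (k ≥ 2) is a finite union of
sets each defined by a finite system of linear equations yᵢ = yⱼ + c together with
fixing some variables to constants; in particular it is a semilinear subset of ℕⁿ. -/
theorem exp_equation_solutions_semilinear (k : ℕ) (hk : 2 ≤ k) (n : ℕ)
    (β : Fin n → ℤ) (C : ℤ) :
    (∃ (m : ℕ) (Sys : Fin m → List (LinConstraint n)),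
      ∀ y : Fin n → ℕ,
        ((∑ j, β j * (k : ℤ) ^ (y j)) + C = 0 ↔
          ∃ s : Fin m, ∀ cns ∈ Sys s, cns.Holds y)) ∧
    (∃ (m : ℕ) (b : Fin m → (Fin n → ℕ)) (P : Fin m → Finset (Fin n → ℕ)),
      ∀ y : Fin n → ℕ,
        ((∑ j, β j * (k : ℤ) ^ (y j)) + C = 0 ↔
          ∃ (s : Fin m) (c : (Fin n → ℕ) → ℕ),
            y = b s + ∑ v ∈ P s, c v • v)) := by
  classical
  set B : ℕ := (∑ j, (β j).natAbs) + C.natAbs + 1 with hBdef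
  have hB0 : 0 < B := by omega
  have hB : ((∑ j, (β j).natAbs : ℕ) : ℤ) + (C.natAbs : ℤ) < (k : ℤ) ^ B := by
    have h1 : (∑ j, (β j).natAbs) + C.natAbs < 2 ^ B := by
      have h2 := Nat.lt_two_pow_self (n := B)
      omega
    have h2 : (2 : ℕ) ^ B ≤ k ^ B := Nat.pow_le_pow_left hk B
    have h3 : (∑ j, (β j).natAbs) + C.natAbs < k ^ B := lt_of_lt_of_le h1 h2
    exact_mod_cast h3
  set L := (ExpEq.GoodPats k β C B).toList with hLdef
  have hget : ∀ s : Fin L.length, L.get s ∈ ExpEq.GoodPats k β C B := by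
    intro s
    have hmem : L.get s ∈ L := L.get_mem s
    exact Finset.mem_toList.mp hmem
  constructor
  · refine ⟨L.length, fun s => ExpEq.SysOf (L.get s), ?_⟩
    intro y
    constructor
    · intro hy
      obtain ⟨hGP, hcst⟩ := ExpEq.complete β C hk hB0 hB hy
      obtain ⟨s, hs⟩ := List.mem_iff_get.mp
        (Finset.mem_toList.mpr (ExpEq.GoodPats_mem_of β C hGP))
      refine ⟨s, ?_⟩
      have hs' : L.get s = (ExpEq.bvec B y, ExpEq.pivot B y) := hs
      show ∀ cns ∈ ExpEq.SysOf (L.get s), cns.Holds y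
      rw [hs']
      exact (ExpEq.holdsAll_iff _ y).mpr hcst
    · rintro ⟨s, hs⟩
      have hgp := ExpEq.GoodP_of_mem β C (hget s)
      exact hgp.2.2 y ((ExpEq.holdsAll_iff _ y).mp hs)
  · refine ⟨L.length, fun s => (L.get s).1, fun s => ExpEq.POf (L.get s), ?_⟩
    intro y
    constructor
    · intro hy
      obtain ⟨hGP, hcst⟩ := ExpEq.complete β C hk hB0 hB hy
      obtain ⟨s, hs⟩ := List.mem_iff_get.mp
        (Finset.mem_toList.mpr (ExpEq.GoodPats_mem_of β C hGP))
      have hs' : L.get s = (ExpEq.bvec B y, ExpEq.pivot B y) := hs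
      have hgp := ExpEq.GoodP_of_mem β C (hget s)
      obtain ⟨c, hc⟩ := (ExpEq.equivSets (L.get s) hgp.2.1 y).mp
        (by rw [hs']; exact hcst)
      exact ⟨s, c, hc⟩
    · rintro ⟨s, c, hc⟩
      have hgp := ExpEq.GoodP_of_mem β C (hget s)
      exact hgp.2.2 y ((ExpEq.equivSets (L.get s) hgp.2.1 y).mpr ⟨c, hc⟩)
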